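/- arXiv:1603.07135 — 4 statements merged into one kernel-verified Lean document; each statement's English description precedes it below -/
import Mathlib

section
/- If q' and q'' are both maximizers of f(q) = Σ_j p_j log S_j(q) over the standard simplex, then S_j(q') = S_j(q'') for every j with p_j > 0. -/
/-!
The midpoint `q` of two maximizers is feasible and `S q` is the midpoint of their sums, so by
strict concavity of `log` the value `f q` exceeds the average `f q' = f q''` of their values
unless `S q' j = S q'' j` at every `j` with `p j > 0`.
-/

open Finset

namespace Real

theorem add_log_div_two_lt_log_add_div_two {a b : ℝ} (ha : 0 < a) (hb : 0 < b) (hab : a ≠ b) :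
    (log a + log b) / 2 < log ((a + b) / 2) := by
  have h := strictConcaveOn_log_Ioi.2 (Set.mem_Ioi.2 ha) (Set.mem_Ioi.2 hb) hab
    (by norm_num : (0 : ℝ) < 1 / 2) (by norm_num : (0 : ℝ) < 1 / 2) (by norm_num)
  rw [smul_eq_mul, smul_eq_mul, smul_eq_mul, smul_eq_mul, ← mul_add, ← mul_add] at h
  rwa [one_div_mul_eq_div, one_div_mul_eq_div] at h

theorem add_log_div_two_le_log_add_div_two {a b : ℝ} (ha : 0 < a) (hb : 0 < b) :
    (log a + log b) / 2 ≤ log ((a + b) / 2) := by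
  rcases eq_or_ne a b with rfl | hab
  · rw [add_self_div_two, add_self_div_two]
  · exact (add_log_div_two_lt_log_add_div_two ha hb hab).le

end Real

open Real in
theorem eq_of_sum_mul_log_add_div_two_le {ι : Type*} (s : Finset ι) (p x y : ι → ℝ)
    (hp : ∀ j ∈ s, 0 ≤ p j) (hx : ∀ j ∈ s, 0 < p j → 0 < x j) (hy : ∀ j ∈ s, 0 < p j → 0 < y j)
    (h : ∑ j ∈ s, p j * log ((x j + y j) / 2) ≤ ∑ j ∈ s, p j * ((log (x j) + log (y j)) / 2)) :
    ∀ j ∈ s, 0 < p j → x j = y j := by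
  have hle : ∀ j ∈ s, p j * ((log (x j) + log (y j)) / 2) ≤ p j * log ((x j + y j) / 2) := by
    intro j hj
    rcases (hp j hj).eq_or_lt with hpj | hpj
    · simp [← hpj]
    · exact mul_le_mul_of_nonneg_left
        (add_log_div_two_le_log_add_div_two (hx j hj hpj) (hy j hj hpj)) hpj.le
  have heq := (sum_eq_sum_iff_of_le hle).1 (le_antisymm (sum_le_sum hle) h)
  intro j hj hpj
  by_contra hxy
  exact (mul_lt_mul_of_pos_left
    (add_log_div_two_lt_log_add_div_two (hx j hj hpj) (hy j hj hpj) hxy) hpj).ne (heq j hj)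

theorem optimal_sums_unique_general
    (n m : ℕ) (p : Fin n → ℝ) (C : Fin m → Finset (Fin n))
    (hp : ∀ j, 0 ≤ p j)
    (S : (Fin m → ℝ) → Fin n → ℝ)
    (hS : ∀ q j, S q j = ∑ i ∈ univ.filter (fun i => j ∈ C i), q i)
    (f : (Fin m → ℝ) → ℝ)
    (hf : ∀ q, f q = ∑ j, p j * Real.log (S q j))
    (Feas : (Fin m → ℝ) → Prop)
    (hFeas : ∀ q, Feas q ↔ (∀ i, 0 ≤ q i) ∧ ∑ i, q i = 1 ∧
      ∀ j, 0 < p j → 0 < S q j)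
    (q' q'' : Fin m → ℝ)
    (hq' : Feas q') (hq'' : Feas q'')
    (hmax' : ∀ q, Feas q → f q ≤ f q')
    (hmax'' : ∀ q, Feas q → f q ≤ f q'') :
    ∀ j, 0 < p j → S q' j = S q'' j := by
  obtain ⟨hnonneg', hsum', hpos'⟩ := (hFeas q').1 hq'
  obtain ⟨hnonneg'', hsum'', hpos''⟩ := (hFeas q'').1 hq''
  set q : Fin m → ℝ := fun i => (q' i + q'' i) / 2
  have hSq : ∀ j, S q j = (S q' j + S q'' j) / 2 := fun j => by
    simp only [hS, q, ← sum_div, sum_add_distrib]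
  have hq : Feas q := (hFeas q).2
    ⟨fun i => by simp only [q]; linarith [hnonneg' i, hnonneg'' i],
     by simp only [q, ← sum_div, sum_add_distrib, hsum', hsum'']; norm_num,
     fun j hj => by rw [hSq]; linarith [hpos' j hj, hpos'' j hj]⟩
  have hf_eq : f q' = f q'' := le_antisymm (hmax'' q' hq') (hmax' q'' hq'')
  intro j hj
  refine eq_of_sum_mul_log_add_div_two_le univ p (S q') (S q'') (fun j _ => hp j)
    (fun j _ => hpos' j) (fun j _ => hpos'' j) ?_ j (mem_univ j) hj
  calc ∑ j, p j * Real.log ((S q' j + S q'' j) / 2) = f q := by simp only [hf, hSq]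
    _ ≤ (f q' + f q'') / 2 := by linarith [hmax' q hq]
    _ = ∑ j, p j * ((Real.log (S q' j) + Real.log (S q'' j)) / 2) := by
      simp only [hf, ← sum_add_distrib, sum_div, mul_add, add_div, mul_div_assoc]

/-- If `q'` and `q''` both maximize `f(q) = ∑ⱼ pⱼ log Sⱼ(q)` over the
standard simplex, then `Sⱼ(q') = Sⱼ(q'')` for every `j` with `pⱼ > 0`. -/
theorem optimal_sums_unique
    (n m : ℕ) (p : Fin n → ℝ) (C : Fin m → Finset (Fin n))
    (hp : ∀ j, 0 ≤ p j) (hpsum : ∑ j, p j = 1)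
    (S : (Fin m → ℝ) → Fin n → ℝ)
    (hS : ∀ q j, S q j = ∑ i ∈ univ.filter (fun i => j ∈ C i), q i)
    (f : (Fin m → ℝ) → ℝ)
    (hf : ∀ q, f q = ∑ j, p j * Real.log (S q j))
    (Feas : (Fin m → ℝ) → Prop)
    (hFeas : ∀ q, Feas q ↔ (∀ i, 0 ≤ q i) ∧ ∑ i, q i = 1 ∧
      ∀ j, 0 < p j → 0 < S q j)
    (q' q'' : Fin m → ℝ)
    (hq' : Feas q') (hq'' : Feas q'')
    (hmax' : ∀ q, Feas q → f q ≤ f q')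
    (hmax'' : ∀ q, Feas q → f q ≤ f q'') :
    ∀ j, 0 < p j → S q' j = S q'' j :=
  optimal_sums_unique_general n m p C hp S hS f hf Feas hFeas q' q'' hq' hq'' hmax' hmax''
end

section
/- The set of maximizers of f(q) = Σ_j p_j log S_j(q) over the standard simplex is a convex polyhedron; specifically, it equals the set of feasible q satisfying the linear equations S_j(q) = s_j for all j, where s_j are the (common) optimal values of S_j. -/
open Finset Matrix

/-!
`y ↦ ∑ⱼ pⱼ log yⱼ` is strictly concave on the positive orthant and `f` is its composition with
the linear map `q ↦ S q`. Restricted to the convex image of the feasible set, a strictly concave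
function has at most one maximizer, so all maximizers `q` share the value `S q = s`. Conversely
`f q` depends on `q` only through `S q`, so every point of the simplex with `S q = s` is
feasible and optimal.
-/

section

variable {𝕜 E F β : Type*} [Field 𝕜] [LinearOrder 𝕜] [IsStrictOrderedRing 𝕜]
  [AddCommGroup E] [Module 𝕜 E] [AddCommGroup F] [Module 𝕜 F]
  [AddCommMonoid β] [PartialOrder β] [IsOrderedAddMonoid β] [Module 𝕜 β] [PosSMulMono 𝕜 β]
  {Φ : F → β} {T : Set F} {K : Set E}

theorem StrictConcaveOn.setOf_isMaxOn_comp_linearMap (hΦ : StrictConcaveOn 𝕜 T Φ)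
    (L : E →ₗ[𝕜] F) (hK : Convex 𝕜 K) (hKT : Set.MapsTo L K T) {x₀ : E} (hx₀ : x₀ ∈ K)
    (hmax : IsMaxOn (Φ ∘ L) K x₀) :
    {x | x ∈ K ∧ IsMaxOn (Φ ∘ L) K x} = {x | x ∈ K ∧ L x = L x₀} := by
  have hΦK : StrictConcaveOn 𝕜 (L '' K) Φ := hΦ.subset hKT.image_subset (hK.linear_image L)
  have isMaxOn_image {x : E} (hx : IsMaxOn (Φ ∘ L) K x) : IsMaxOn Φ (L '' K) (L x) := by
    rintro _ ⟨y, hy, rfl⟩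
    exact hx hy
  ext x
  refine ⟨fun ⟨hx, hxmax⟩ => ⟨hx, ?_⟩, fun ⟨hx, hLx⟩ => ⟨hx, ?_⟩⟩
  · exact hΦK.eq_of_isMaxOn (isMaxOn_image hxmax) (isMaxOn_image hmax)
      (Set.mem_image_of_mem L hx) (Set.mem_image_of_mem L hx₀)
  · intro y hy
    simpa [hLx] using hmax hy

end

theorem StrictConcaveOn.sum_mul_comp_apply {𝕜 ι : Type*} [Field 𝕜] [LinearOrder 𝕜]
    [IsStrictOrderedRing 𝕜] [Fintype ι] {s : Set 𝕜} {φ : 𝕜 → 𝕜}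
    (hφ : StrictConcaveOn 𝕜 s φ) {w : ι → 𝕜} (hw : ∀ i, 0 < w i) :
    StrictConcaveOn 𝕜 (Set.univ.pi fun _ => s) fun y => ∑ i, w i * φ (y i) := by
  refine ⟨convex_pi fun _ _ => hφ.1, fun x hx y hy hxy a b ha hb hab => ?_⟩
  obtain ⟨j, hj⟩ := Function.ne_iff.1 hxy
  simp only [smul_eq_mul, Finset.mul_sum, ← Finset.sum_add_distrib, Pi.add_apply, Pi.smul_apply]
  refine Finset.sum_lt_sum (fun i _ => ?_) ⟨j, mem_univ j, ?_⟩
  · have := hφ.concaveOn.2 (hx i trivial) (hy i trivial) ha.le hb.le hab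
    simp only [smul_eq_mul] at this
    nlinarith [hw i]
  · have := hφ.2 (hx j trivial) (hy j trivial) hj ha hb hab
    simp only [smul_eq_mul] at this
    nlinarith [hw j]

def incidenceMatrix {ι κ : Type*} [DecidableEq κ] (C : ι → Finset κ) : Matrix κ ι ℝ :=
  Matrix.of fun j i => if j ∈ C i then 1 else 0

theorem incidenceMatrix_mulVec_apply {ι κ : Type*} [Fintype ι] [DecidableEq κ]
    (C : ι → Finset κ) (q : ι → ℝ) (j : κ) :
    (incidenceMatrix C *ᵥ q) j = ∑ i ∈ univ.filter (fun i => j ∈ C i), q i := by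
  simp [incidenceMatrix, mulVec, dotProduct, Finset.sum_filter]

theorem maximizer_set_is_polyhedron_general
    (n m : ℕ) (p : Fin n → ℝ) (C : Fin m → Finset (Fin n))
    (hp : ∀ j, 0 < p j)
    (S : (Fin m → ℝ) → Fin n → ℝ)
    (hS : ∀ q j, S q j = ∑ i ∈ univ.filter (fun i => j ∈ C i), q i)
    (f : (Fin m → ℝ) → ℝ)
    (hf : ∀ q, f q = ∑ j, p j * Real.log (S q j))
    (Feas : (Fin m → ℝ) → Prop)
    (hFeas : ∀ q, Feas q ↔ (∀ i, 0 ≤ q i) ∧ ∑ i, q i = 1 ∧ ∀ j, 0 < S q j)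
    (qopt : Fin m → ℝ) (hqopt : Feas qopt)
    (hmax : ∀ q, Feas q → f q ≤ f qopt)
    (s : Fin n → ℝ) (hs : ∀ j, s j = S qopt j) :
    {q : Fin m → ℝ | Feas q ∧ ∀ q', Feas q' → f q' ≤ f q}
      = {q : Fin m → ℝ | (∀ i, 0 ≤ q i) ∧ ∑ i, q i = 1 ∧ ∀ j, S q j = s j} ∧
    Convex ℝ {q : Fin m → ℝ | (∀ i, 0 ≤ q i) ∧ ∑ i, q i = 1 ∧ ∀ j, S q j = s j} := by
  set L := (incidenceMatrix C).mulVecLin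
  obtain rfl : S = L := funext₂ fun q j => by simp [L, hS, incidenceMatrix_mulVec_apply]
  obtain rfl : f = (fun y => ∑ j, p j * Real.log (y j)) ∘ L := funext hf
  obtain rfl : s = L qopt := funext hs
  set K := stdSimplex ℝ (Fin m) ∩ L ⁻¹' Set.univ.pi fun _ => Set.Ioi 0
  obtain rfl : Feas = (· ∈ K) :=
    funext fun q => propext <| (hFeas q).trans <| by simp [K, stdSimplex, and_assoc]
  have hK : Convex ℝ K :=
    (convex_stdSimplex ℝ _).inter ((convex_pi fun _ _ => convex_Ioi 0).linear_preimage L)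
  have hfiber := (strictConcaveOn_log_Ioi.sum_mul_comp_apply hp).setOf_isMaxOn_comp_linearMap
    L hK (fun _ hq => hq.2) hqopt (isMaxOn_iff.2 hmax)
  have hpolyhedron : {q | (∀ i, 0 ≤ q i) ∧ ∑ i, q i = 1 ∧ ∀ j, L q j = L qopt j}
      = stdSimplex ℝ (Fin m) ∩ L ⁻¹' {L qopt} := by
    ext q
    simp [stdSimplex, and_assoc, funext_iff]
  rw [hpolyhedron]
  refine ⟨?_, (convex_stdSimplex ℝ _).inter ((convex_singleton _).linear_preimage L)⟩
  calc _ = {q | q ∈ K ∧ L q = L qopt} := by simpa only [isMaxOn_iff] using hfiber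
    _ = stdSimplex ℝ (Fin m) ∩ L ⁻¹' {L qopt} := by
      ext q
      refine ⟨fun ⟨hq, hLq⟩ => ⟨hq.1, hLq⟩, fun ⟨hq, hLq⟩ => ⟨⟨hq, ?_⟩, hLq⟩⟩
      exact Set.mem_preimage.2 ((Set.mem_singleton_iff.1 hLq).symm ▸ hqopt.2)

/-- The set of maximizers of `f(q) = ∑ⱼ pⱼ log Sⱼ(q)` over the standard
simplex is a convex polyhedron: it equals the set of feasible `q` satisfying the
linear equations `Sⱼ(q) = sⱼ`, where `sⱼ` are the (common) optimal values of `Sⱼ`. -/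
theorem maximizer_set_is_polyhedron
    (n m : ℕ) (p : Fin n → ℝ) (C : Fin m → Finset (Fin n))
    (hp : ∀ j, 0 < p j) (hpsum : ∑ j, p j = 1)
    (S : (Fin m → ℝ) → Fin n → ℝ)
    (hS : ∀ q j, S q j = ∑ i ∈ univ.filter (fun i => j ∈ C i), q i)
    (f : (Fin m → ℝ) → ℝ)
    (hf : ∀ q, f q = ∑ j, p j * Real.log (S q j))
    (Feas : (Fin m → ℝ) → Prop)
    (hFeas : ∀ q, Feas q ↔ (∀ i, 0 ≤ q i) ∧ ∑ i, q i = 1 ∧ ∀ j, 0 < S q j)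
    (qopt : Fin m → ℝ) (hqopt : Feas qopt)
    (hmax : ∀ q, Feas q → f q ≤ f qopt)
    (s : Fin n → ℝ) (hs : ∀ j, s j = S qopt j) :
    {q : Fin m → ℝ | Feas q ∧ ∀ q', Feas q' → f q' ≤ f q}
      = {q : Fin m → ℝ | (∀ i, 0 ≤ q i) ∧ ∑ i, q i = 1 ∧ ∀ j, S q j = s j} ∧
    Convex ℝ {q : Fin m → ℝ | (∀ i, 0 ≤ q i) ∧ ∑ i, q i = 1 ∧ ∀ j, S q j = s j} :=
  maximizer_set_is_polyhedron_general n m p C hp S hS f hf Feas hFeas qopt hqopt hmax s hs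
end

section
/- If q is a maximizer of f(q) = Σ_j p_j log S_j(q) over the standard simplex (with all S_j(q) > 0), then for every i with q_i > 0 one has Σ_{j ∈ Pts(i)} p_j / S_j(q) = 1, and for every i with q_i = 0 one has Σ_{j ∈ Pts(i)} p_j / S_j(q) ≤ 1. -/
/-!
Let `g i = ∑_{j ∈ Pts(i)} p j / S_j(q)`, the partial derivative `∂f/∂q_i`. Moving mass `t` from
simplex `i` to simplex `k` keeps `q` feasible for `0 ≤ t < q i`, and the derivative of `f` along
this move at `t = 0` is `g k - g i`; so at a maximizer `g k ≤ g i` whenever `q i > 0`, i.e. `g`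
attains its maximum on the support of `q`. Since `S` is linear, `∑ i, q i * g i = ∑ j, p j = 1`,
and this `q`-weighted mean of `g` over maximizers of `g` forces `max g = 1`.
-/

open Finset Filter Topology

theorem IsMaxFilter.hasDerivWithinAt_nonpos {φ : ℝ → ℝ} {φ' a : ℝ}
    (h : IsMaxFilter φ (𝓝[>] a) a) (hφ : HasDerivWithinAt φ φ' (Set.Ioi a) a) : φ' ≤ 0 := by
  rw [hasDerivWithinAt_iff_tendsto_slope' Set.self_notMem_Ioi] at hφ
  refine le_of_tendsto hφ ?_
  filter_upwards [h, self_mem_nhdsWithin] with t hle hlt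
  rw [slope_def_field]
  exact div_nonpos_of_nonpos_of_nonneg (sub_nonpos.2 hle) (sub_nonneg.2 (le_of_lt hlt))

section WeightedMean

variable {ι : Type*} [Fintype ι] {q g : ι → ℝ}

theorem le_sum_mul_of_le_on_support (hq : ∀ i, 0 ≤ q i) (hsum : ∑ i, q i = 1) {k : ι}
    (hk : ∀ i, 0 < q i → g k ≤ g i) : g k ≤ ∑ i, q i * g i :=
  calc g k = ∑ i, q i * g k := by rw [← sum_mul, hsum, one_mul]
    _ ≤ ∑ i, q i * g i := sum_le_sum fun i _ => by
      rcases (hq i).eq_or_lt with h | h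
      · simp [← h]
      · exact mul_le_mul_of_nonneg_left (hk i h) h.le

theorem sum_mul_le_of_forall_le (hq : ∀ i, 0 ≤ q i) (hsum : ∑ i, q i = 1) {i : ι}
    (hi : ∀ k, g k ≤ g i) : ∑ k, q k * g k ≤ g i :=
  calc ∑ k, q k * g k ≤ ∑ k, q k * g i :=
        sum_le_sum fun k _ => mul_le_mul_of_nonneg_left (hi k) (hq k)
    _ = g i := by rw [← sum_mul, hsum, one_mul]

end WeightedMean

namespace SimplexCover

variable {ι κ : Type*} [Fintype ι] [DecidableEq κ]

def coverSum (C : ι → Finset κ) (q : ι → ℝ) (j : κ) : ℝ :=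
  ∑ i ∈ univ.filter (fun i => j ∈ C i), q i

def Feasible (C : ι → Finset κ) (q : ι → ℝ) : Prop :=
  (∀ i, 0 ≤ q i) ∧ ∑ i, q i = 1 ∧ ∀ j, 0 < coverSum C q j

theorem coverSum_add_smul (C : ι → Finset κ) (q v : ι → ℝ) (t : ℝ) (j : κ) :
    coverSum C (q + t • v) j = coverSum C q j + t * coverSum C v j := by
  simp only [coverSum, Pi.add_apply, Pi.smul_apply, smul_eq_mul, sum_add_distrib, mul_sum]

theorem coverSum_single [DecidableEq ι] (C : ι → Finset κ) (k : ι) (a : ℝ) (j : κ) :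
    coverSum C (Pi.single k a) j = if j ∈ C k then a else 0 := by
  simp [coverSum, sum_pi_single']

theorem coverSum_sub (C : ι → Finset κ) (q v : ι → ℝ) (j : κ) :
    coverSum C (q - v) j = coverSum C q j - coverSum C v j := by
  simp only [coverSum, Pi.sub_apply, sum_sub_distrib]

theorem single_le_coverSum {C : ι → Finset κ} {q : ι → ℝ} (hq : ∀ i, 0 ≤ q i) {i : ι} {j : κ}
    (hj : j ∈ C i) : q i ≤ coverSum C q j :=
  single_le_sum (fun i _ => hq i) (by simpa using hj)

theorem sum_mul_coverSum [Fintype κ] (C : ι → Finset κ) (w : κ → ℝ) (v : ι → ℝ) :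
    ∑ j, w j * coverSum C v j = ∑ i, v i * ∑ j ∈ C i, w j := by
  simp only [coverSum, sum_filter, mul_sum, mul_ite, mul_zero]
  rw [sum_comm]
  refine sum_congr rfl fun i _ => ?_
  rw [sum_ite_mem, univ_inter]
  exact sum_congr rfl fun j _ => mul_comm _ _

theorem Feasible.add_smul_single_sub_single [DecidableEq ι] {C : ι → Finset κ} {q : ι → ℝ}
    (hq : Feasible C q) (k : ι) {i : ι} {t : ℝ} (ht : 0 ≤ t) (hti : t < q i) :
    Feasible C (q + t • (Pi.single k 1 - Pi.single i 1)) := by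
  obtain ⟨hq_nonneg, hq_sum, hq_pos⟩ := hq
  refine ⟨fun l => ?_, ?_, fun j => ?_⟩
  · have := hq_nonneg l
    simp only [Pi.add_apply, Pi.smul_apply, Pi.sub_apply, Pi.single_apply, smul_eq_mul]
    split_ifs <;> subst_vars <;> linarith
  · simp [sum_add_distrib, ← mul_sum, sum_sub_distrib, hq_sum]
  · rw [coverSum_add_smul, coverSum_sub, coverSum_single, coverSum_single]
    have := hq_pos j
    by_cases hi : j ∈ C i
    · have := single_le_coverSum hq_nonneg hi
      split_ifs <;> linarith
    · split_ifs <;> nlinarith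

variable [Fintype κ]

noncomputable def logLik (p : κ → ℝ) (C : ι → Finset κ) (q : ι → ℝ) : ℝ :=
  ∑ j, p j * Real.log (coverSum C q j)

noncomputable def logLikGrad (p : κ → ℝ) (C : ι → Finset κ) (q : ι → ℝ) (i : ι) : ℝ :=
  ∑ j ∈ C i, p j / coverSum C q j

theorem hasDerivAt_logLik_add_smul (p : κ → ℝ) (C : ι → Finset κ) {q : ι → ℝ}
    (hq : ∀ j, coverSum C q j ≠ 0) (v : ι → ℝ) :
    HasDerivAt (fun t : ℝ => logLik p C (q + t • v)) (∑ i, v i * logLikGrad p C q i) 0 := by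
  have hline (j : κ) : HasDerivAt (fun t : ℝ => coverSum C (q + t • v) j) (coverSum C v j) 0 := by
    simp only [coverSum_add_smul]
    simpa using ((hasDerivAt_id (0 : ℝ)).mul_const (coverSum C v j)).const_add (coverSum C q j)
  have hsum := HasDerivAt.fun_sum fun j (_ : j ∈ univ) =>
    ((hline j).log (by simpa using hq j)).const_mul (p j)
  simp only [zero_smul, add_zero] at hsum
  refine hsum.congr_deriv ?_
  simp only [logLikGrad]
  rw [← sum_mul_coverSum C (fun j => p j / coverSum C q j) v]
  exact sum_congr rfl fun j _ => by ring

theorem sum_mul_logLikGrad (p : κ → ℝ) (C : ι → Finset κ) {q : ι → ℝ}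
    (hq : ∀ j, coverSum C q j ≠ 0) : ∑ i, q i * logLikGrad p C q i = ∑ j, p j := by
  simp only [logLikGrad]
  rw [← sum_mul_coverSum C (fun j => p j / coverSum C q j) q]
  exact sum_congr rfl fun j _ => div_mul_cancel₀ _ (hq j)

theorem logLikGrad_le_of_isMaxOn [DecidableEq ι] {p : κ → ℝ} {C : ι → Finset κ} {q : ι → ℝ}
    (hmax : IsMaxOn (logLik p C) {q' | Feasible C q'} q) (hq : Feasible C q) (k : ι) {i : ι}
    (hi : 0 < q i) : logLikGrad p C q k ≤ logLikGrad p C q i := by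
  set v : ι → ℝ := Pi.single k 1 - Pi.single i 1
  have hderiv := hasDerivAt_logLik_add_smul p C (fun j => (hq.2.2 j).ne') v
  have hv : ∑ l, v l * logLikGrad p C q l = logLikGrad p C q k - logLikGrad p C q i := by
    simp [v, sub_mul, Pi.single_apply]
  have hloc : IsMaxFilter (fun t : ℝ => logLik p C (q + t • v)) (𝓝[>] 0) 0 := by
    filter_upwards [Ioo_mem_nhdsGT hi] with t ht
    simpa using hmax (hq.add_smul_single_sub_single k ht.1.le ht.2)
  rw [hv] at hderiv
  exact sub_nonpos.1 (hloc.hasDerivWithinAt_nonpos hderiv.hasDerivWithinAt)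

end SimplexCover

open SimplexCover

theorem kkt_complementarity_conditions_general
    (n m : ℕ) (p : Fin n → ℝ) (C : Fin m → Finset (Fin n))
    (hpsum : ∑ j, p j = 1)
    (S : (Fin m → ℝ) → Fin n → ℝ)
    (hS : ∀ q' j, S q' j = ∑ i ∈ univ.filter (fun i => j ∈ C i), q' i)
    (f : (Fin m → ℝ) → ℝ)
    (hf : ∀ q', f q' = ∑ j, p j * Real.log (S q' j))
    (Feas : (Fin m → ℝ) → Prop)
    (hFeas : ∀ q', Feas q' ↔ (∀ i, 0 ≤ q' i) ∧ ∑ i, q' i = 1 ∧ ∀ j, 0 < S q' j)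
    (q : Fin m → ℝ) (hq : Feas q)
    (hmax : ∀ q', Feas q' → f q' ≤ f q) :
    ∀ i : Fin m,
      (0 < q i → ∑ j ∈ C i, p j / S q j = 1) ∧
      (q i = 0 → ∑ j ∈ C i, p j / S q j ≤ 1) := by
  obtain rfl : S = coverSum C := funext fun q' => funext (hS q')
  obtain rfl : f = logLik p C := funext hf
  obtain rfl : Feas = Feasible C := funext fun q' => propext (hFeas q')
  have hmean : ∑ i, q i * logLikGrad p C q i = 1 := by
    rw [sum_mul_logLikGrad p C fun j => (hq.2.2 j).ne', hpsum]
  have hgrad_le (i k : Fin m) (hi : 0 < q i) : logLikGrad p C q k ≤ logLikGrad p C q i :=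
    logLikGrad_le_of_isMaxOn (isMaxOn_iff.2 hmax) hq k hi
  have hle_one (i : Fin m) : logLikGrad p C q i ≤ 1 :=
    hmean ▸ le_sum_mul_of_le_on_support hq.1 hq.2.1 fun k hk => hgrad_le k i hk
  refine fun i => ⟨fun hi => le_antisymm (hle_one i) ?_, fun _ => hle_one i⟩
  exact hmean ▸ sum_mul_le_of_forall_le hq.1 hq.2.1 fun k => hgrad_le i k hi

/-- KKT / first-order optimality conditions. If `q` maximizes
`f(q) = ∑ⱼ pⱼ log Sⱼ(q)` over the standard simplex (with all `Sⱼ(q) > 0`), then for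
every `i` with `qᵢ > 0` one has `∑_{j ∈ Pts(i)} pⱼ / Sⱼ(q) = 1`, and for every `i`
with `qᵢ = 0` one has `∑_{j ∈ Pts(i)} pⱼ / Sⱼ(q) ≤ 1`. -/
theorem kkt_complementarity_conditions
    (n m : ℕ) (p : Fin n → ℝ) (C : Fin m → Finset (Fin n))
    (hp : ∀ j, 0 ≤ p j) (hpsum : ∑ j, p j = 1)
    (S : (Fin m → ℝ) → Fin n → ℝ)
    (hS : ∀ q' j, S q' j = ∑ i ∈ univ.filter (fun i => j ∈ C i), q' i)
    (f : (Fin m → ℝ) → ℝ)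
    (hf : ∀ q', f q' = ∑ j, p j * Real.log (S q' j))
    (Feas : (Fin m → ℝ) → Prop)
    (hFeas : ∀ q', Feas q' ↔ (∀ i, 0 ≤ q' i) ∧ ∑ i, q' i = 1 ∧ ∀ j, 0 < S q' j)
    (q : Fin m → ℝ) (hq : Feas q)
    (hmax : ∀ q', Feas q' → f q' ≤ f q) :
    ∀ i : Fin m,
      (0 < q i → ∑ j ∈ C i, p j / S q j = 1) ∧
      (q i = 0 → ∑ j ∈ C i, p j / S q j ≤ 1) :=
  kkt_complementarity_conditions_general n m p C hpsum S hS f hf Feas hFeas q hq hmax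
end

section
/- Monotonicity: if every maximal simplex of complex C is contained in some maximal simplex of complex C' (both on the same vertex set), then H(C',P) ≤ H(C,P). -/
open Finset

/-!
Send each simplex `C i` to a simplex `C' (σ i) ⊇ C i` and push a feasible weighting `q` forward
along `σ`. Every vertex is then covered by at least as much weight as before, so the pushed-forward
weighting is feasible for `C'` and, `log (1 / ·)` being antitone, its objective is at most that of
`q`. Taking `q` optimal for `C` gives `H(C', P) ≤ H(C, P)`.
-/

namespace SimplicialEntropy

variable {ι ι' V : Type*} [Fintype ι]

def coverage [DecidableEq V] (C : ι → Finset V) (q : ι → ℝ) (v : V) : ℝ :=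
  ∑ i with v ∈ C i, q i

def pushforward [DecidableEq ι'] (σ : ι → ι') (q : ι → ℝ) (i' : ι') : ℝ :=
  ∑ i with σ i = i', q i

variable [DecidableEq ι']

theorem sum_pushforward [Fintype ι'] (σ : ι → ι') (q : ι → ℝ) :
    ∑ i', pushforward σ q i' = ∑ i, q i :=
  sum_fiberwise univ σ q

theorem pushforward_nonneg (σ : ι → ι') {q : ι → ℝ} (hq : ∀ i, 0 ≤ q i) (i' : ι') :
    0 ≤ pushforward σ q i' :=
  sum_nonneg fun i _ => hq i

theorem coverage_le_coverage_pushforward [Fintype ι'] [DecidableEq V]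
    {C : ι → Finset V} {C' : ι' → Finset V} {σ : ι → ι'} (hσ : ∀ i, C i ⊆ C' (σ i)) {q : ι → ℝ} (hq : ∀ i, 0 ≤ q i) (v : V) :
    coverage C q v ≤ coverage C' (pushforward σ q) v := by
  unfold coverage pushforward
  rw [sum_fiberwise_eq_sum_filter]
  refine sum_le_sum_of_subset_of_nonneg (fun i hi => ?_) fun i _ _ => hq i
  simp only [mem_filter, mem_univ, true_and] at hi ⊢
  exact hσ i hi

end SimplicialEntropy

theorem sum_mul_log_one_div_le_of_le {V : Type*} [Fintype V] {p s t : V → ℝ}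
    (hp : ∀ v, 0 ≤ p v) (hs : ∀ v, 0 < p v → 0 < s v) (hst : ∀ v, s v ≤ t v) :
    ∑ v, p v * Real.log (1 / t v) ≤ ∑ v, p v * Real.log (1 / s v) := by
  refine sum_le_sum fun v _ => ?_
  rcases (hp v).eq_or_lt with hp0 | hp0
  · simp [← hp0]
  · refine mul_le_mul_of_nonneg_left ?_ hp0.le
    rw [one_div, one_div, Real.log_inv, Real.log_inv, neg_le_neg_iff]
    exact Real.log_le_log (hs v hp0) (hst v)

open SimplicialEntropy in
theorem simplicial_entropy_monotone_general
    (n m m' : ℕ) (p : Fin n → ℝ) (hp : ∀ j, 0 ≤ p j)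
    (C : Fin m → Finset (Fin n)) (C' : Fin m' → Finset (Fin n))
    (href : ∀ i : Fin m, ∃ i' : Fin m', C i ⊆ C' i')
    (S : (Fin m → ℝ) → Fin n → ℝ)
    (hS : ∀ q j, S q j = ∑ i ∈ univ.filter (fun i => j ∈ C i), q i)
    (S' : (Fin m' → ℝ) → Fin n → ℝ)
    (hS' : ∀ q j, S' q j = ∑ i ∈ univ.filter (fun i => j ∈ C' i), q i)
    (obj : (Fin m → ℝ) → ℝ)
    (hobj : ∀ q, obj q = ∑ j, p j * Real.log (1 / S q j))
    (obj' : (Fin m' → ℝ) → ℝ)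
    (hobj' : ∀ q, obj' q = ∑ j, p j * Real.log (1 / S' q j))
    (Feas : (Fin m → ℝ) → Prop)
    (hFeas : ∀ q, Feas q ↔ (∀ i, 0 ≤ q i) ∧ ∑ i, q i = 1 ∧
      ∀ j, 0 < p j → 0 < S q j)
    (Feas' : (Fin m' → ℝ) → Prop)
    (hFeas' : ∀ q, Feas' q ↔ (∀ i, 0 ≤ q i) ∧ ∑ i, q i = 1 ∧
      ∀ j, 0 < p j → 0 < S' q j)
    (qopt : Fin m → ℝ) (hqopt : Feas qopt)
    (qopt' : Fin m' → ℝ)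
    (hmin' : ∀ q, Feas' q → obj' qopt' ≤ obj' q)
    (H H' : ℝ) (hH : H = obj qopt) (hH' : H' = obj' qopt') :
    H' ≤ H := by
  choose σ hσ using href
  obtain rfl : S = coverage C := funext₂ hS
  obtain rfl : S' = coverage C' := funext₂ hS'
  obtain ⟨hq0, hq1, hqpos⟩ := (hFeas qopt).mp hqopt
  have hcov := coverage_le_coverage_pushforward hσ hq0
  have hfeas' : Feas' (pushforward σ qopt) := (hFeas' _).mpr
    ⟨pushforward_nonneg σ hq0, (sum_pushforward σ qopt).trans hq1,
      fun j hj => (hqpos j hj).trans_le (hcov j)⟩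
  calc H' = obj' qopt' := hH'
    _ ≤ obj' (pushforward σ qopt) := hmin' _ hfeas'
    _ ≤ obj qopt := by
      rw [hobj, hobj']
      exact sum_mul_log_one_div_le_of_le hp hqpos hcov
    _ = H := hH.symm

/-- Monotonicity. If every maximal simplex of complex `C` is contained
in some maximal simplex of complex `C'` (both on the same vertex set), then
`H(C',P) ≤ H(C,P)`. -/
theorem simplicial_entropy_monotone
    (n m m' : ℕ) (p : Fin n → ℝ) (hp : ∀ j, 0 ≤ p j) (hpsum : ∑ j, p j = 1)
    (C : Fin m → Finset (Fin n)) (C' : Fin m' → Finset (Fin n))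
    (href : ∀ i : Fin m, ∃ i' : Fin m', C i ⊆ C' i')
    (S : (Fin m → ℝ) → Fin n → ℝ)
    (hS : ∀ q j, S q j = ∑ i ∈ univ.filter (fun i => j ∈ C i), q i)
    (S' : (Fin m' → ℝ) → Fin n → ℝ)
    (hS' : ∀ q j, S' q j = ∑ i ∈ univ.filter (fun i => j ∈ C' i), q i)
    (obj : (Fin m → ℝ) → ℝ)
    (hobj : ∀ q, obj q = ∑ j, p j * Real.log (1 / S q j))
    (obj' : (Fin m' → ℝ) → ℝ)
    (hobj' : ∀ q, obj' q = ∑ j, p j * Real.log (1 / S' q j))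
    (Feas : (Fin m → ℝ) → Prop)
    (hFeas : ∀ q, Feas q ↔ (∀ i, 0 ≤ q i) ∧ ∑ i, q i = 1 ∧
      ∀ j, 0 < p j → 0 < S q j)
    (Feas' : (Fin m' → ℝ) → Prop)
    (hFeas' : ∀ q, Feas' q ↔ (∀ i, 0 ≤ q i) ∧ ∑ i, q i = 1 ∧
      ∀ j, 0 < p j → 0 < S' q j)
    (qopt : Fin m → ℝ) (hqopt : Feas qopt)
    (hmin : ∀ q, Feas q → obj qopt ≤ obj q)
    (qopt' : Fin m' → ℝ) (hqopt' : Feas' qopt')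
    (hmin' : ∀ q, Feas' q → obj' qopt' ≤ obj' q)
    (H H' : ℝ) (hH : H = obj qopt) (hH' : H' = obj' qopt') :
    H' ≤ H :=
  simplicial_entropy_monotone_general n m m' p hp C C' href S hS S' hS' obj hobj obj' hobj' Feas
    hFeas Feas' hFeas' qopt hqopt qopt' hmin' H H' hH hH'
end
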